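/- arXiv:2203.13776 — 7 statements merged into one kernel-verified Lean document; each statement's English description precedes it below -/
import Mathlib

section
/- For all constants C ≥ 1 and A, γ, σ > 0 there exists a finite constant L* = L*(C,A,γ,σ) such that for every drift b ∈ Σ(C,A,γ,σ) and every x ∈ ℝ one has q_b(x) ≤ L* and |q_b'(x)| ≤ L*, where q_b'(x) = 2σ⁻²·b(x)·q_b(x) is the derivative of the invariant density. -/
open MeasureTheory

/-- The paper's class `Lip_loc(ℝ)` of locally Lipschitz functions. -/
def LipLoc (f : ℝ → ℝ) : Prop :=
  ∀ n : ℕ, ∃ L : ℝ, ∀ x y : ℝ, |x| ≤ n → |y| ≤ n → |f x - f y| ≤ L * |x - y|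

/-- The drift class `Σ(C, A, γ, σ)`: locally Lipschitz drifts with at most linear growth
(constant `C`) satisfying `b(x)·sign(x)/σ² ≤ -γ` for `|x| ≥ A`. -/
def driftClass (C A γ σ : ℝ) : Set (ℝ → ℝ) :=
  {b | LipLoc b ∧ (∀ x : ℝ, |b x| ≤ C * (1 + |x|)) ∧
    ∀ x : ℝ, A ≤ |x| → b x * Real.sign x / σ ^ 2 ≤ -γ}

/-- The normalizing constant `C_{b,σ} = ∫_ℝ exp(∫₀ˣ 2 b(u)/σ² du) dx`. -/
noncomputable def normConst (b : ℝ → ℝ) (σ : ℝ) : ℝ :=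
  ∫ x : ℝ, Real.exp (∫ u in (0:ℝ)..x, 2 * b u / σ ^ 2)

/-- The invariant density `q_b(x) = C_{b,σ}⁻¹ exp(∫₀ˣ 2 b(u)/σ² du)`. -/
noncomputable def invDensity (b : ℝ → ℝ) (σ : ℝ) (x : ℝ) : ℝ :=
  (normConst b σ)⁻¹ * Real.exp (∫ u in (0:ℝ)..x, 2 * b u / σ ^ 2)

open Set intervalIntegral

/-!
On `[-A, A]` the linear growth bound keeps the potential `F(x) = ∫₀ˣ 2b/σ²` within `±M`,
`M = 2C(1+A)A/σ²`; outside, the drift condition makes `F` decrease at rate at least `2γ`,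
so `F(x) ≤ M - 2γ (|x| - A)`. Hence `C_{b,σ} ≥ 2A e^{-M}` and `q_b ≤ e^{2M}/(2A)`, while
`(1 + |x|) e^{F(x)}` stays bounded because `t e^{-2γt} ≤ 1/(2γ)`; together with
`|b(x)| ≤ C(1 + |x|)` this bounds `q_b' = 2σ⁻² b q_b`.
-/

lemma LipLoc.continuous {f : ℝ → ℝ} (hf : LipLoc f) : Continuous f := by
  refine continuous_iff_continuousAt.2 fun x => ?_
  obtain ⟨n, hn⟩ := exists_nat_gt |x|
  obtain ⟨L, hL⟩ := hf n
  have hLip : LipschitzOnWith L.toNNReal f (Icc (-n) n) :=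
    LipschitzOnWith.of_dist_le_mul fun y hy z hz => by
      rw [Real.dist_eq, Real.dist_eq]
      exact (hL y z (abs_le.2 hy) (abs_le.2 hz)).trans
        (mul_le_mul_of_nonneg_right (Real.le_coe_toNNReal L) (abs_nonneg _))
  exact hLip.continuousOn.continuousAt
    (Icc_mem_nhds (by linarith [neg_abs_le x]) (by linarith [le_abs_self x]))

lemma mul_exp_neg_mul_le_inv {c : ℝ} (hc : 0 < c) (t : ℝ) : t * Real.exp (-(c * t)) ≤ 1 / c := by
  rw [Real.exp_neg, ← div_eq_mul_inv, div_le_div_iff₀ (Real.exp_pos _) hc]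
  nlinarith [Real.add_one_le_exp (c * t)]

lemma inv_integral_le_of_le_on_Icc {g : ℝ → ℝ} {a m : ℝ} (ha : 0 < a) (hm : 0 < m)
    (hg : ∀ x, 0 ≤ g x) (hgm : ∀ x ∈ Icc (-a) a, m ≤ g x) :
    (∫ x, g x)⁻¹ ≤ (m * (2 * a))⁻¹ := by
  by_cases hint : Integrable g
  · have hvol : volume.real (Icc (-a) a) = 2 * a := by
      rw [Real.volume_real_Icc_of_le (by linarith)]; ring
    have hIcc : m * (2 * a) ≤ ∫ x in Icc (-a) a, g x := by
      simpa [hvol, mul_comm] using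
        setIntegral_ge_of_const_le_real measurableSet_Icc measure_Icc_lt_top.ne hgm
          hint.integrableOn
    exact inv_anti₀ (by positivity)
      (hIcc.trans (setIntegral_le_integral hint (Filter.Eventually.of_forall hg)))
  · -- the Bochner integral of a non-integrable function is `0`, and `0⁻¹ = 0`
    rw [integral_undef hint, inv_zero]
    positivity

section Primitive

variable {f : ℝ → ℝ}

lemma abs_primitive_le_of_abs_le {a B y : ℝ} (hB : ∀ u, |u| ≤ a → |f u| ≤ B) (hy : |y| ≤ a) :
    |∫ u in (0:ℝ)..y, f u| ≤ B * a := by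
  have hB0 : 0 ≤ B := (abs_nonneg _).trans (hB 0 (by simpa using (abs_nonneg y).trans hy))
  calc |∫ u in (0:ℝ)..y, f u| ≤ B * |y - 0| := by
        refine intervalIntegral.norm_integral_le_of_norm_le_const fun u hu =>
          (Real.norm_eq_abs (f u)).trans_le (hB u ?_)
        rcases mem_uIoc.1 hu with h | h <;> rw [abs_le] at hy ⊢ <;> constructor <;> linarith
    _ ≤ B * a := by rw [sub_zero]; exact mul_le_mul_of_nonneg_left hy hB0

lemma primitive_le_sub_mul_of_le_neg (hf : Continuous f) {a c y : ℝ}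
    (h : ∀ u, a ≤ u → f u ≤ -c) (hy : a ≤ y) :
    ∫ u in (0:ℝ)..y, f u ≤ (∫ u in (0:ℝ)..a, f u) - c * (y - a) := by
  have htail : ∫ u in a..y, f u ≤ ∫ _ in a..y, -c :=
    integral_mono_on hy (hf.intervalIntegrable _ _) intervalIntegrable_const fun u hu => h u hu.1
  rw [← integral_add_adjacent_intervals (hf.intervalIntegrable 0 a) (hf.intervalIntegrable a y)]
  simp only [intervalIntegral.integral_const, smul_eq_mul] at htail
  linarith

lemma primitive_neg_comp_neg (y : ℝ) :
    ∫ u in (0:ℝ)..y, -f (-u) = ∫ u in (0:ℝ)..(-y), f u := by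
  rw [intervalIntegral.integral_neg, integral_comp_neg, neg_zero, integral_symm, neg_neg]

lemma primitive_le_sub_mul_max {a c M : ℝ} (hf : Continuous f) (ha : 0 < a)
    (hM : ∀ u, |u| ≤ a → ∫ v in (0:ℝ)..u, f v ≤ M)
    (hsign : ∀ u, a ≤ |u| → f u * Real.sign u ≤ -c) (y : ℝ) :
    ∫ u in (0:ℝ)..y, f u ≤ M - c * max (|y| - a) 0 := by
  rcases le_total |y| a with hy | hy
  · simpa [max_eq_right (sub_nonpos.2 hy)] using hM y hy
  rw [max_eq_left (sub_nonneg.2 hy)]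
  rcases le_total 0 y with hy0 | hy0
  · rw [abs_of_nonneg hy0] at hy ⊢
    have hright : ∀ u, a ≤ u → f u ≤ -c := fun u hu => by
      simpa [Real.sign_of_pos (ha.trans_le hu)] using hsign u (hu.trans (le_abs_self u))
    have hMa : ∫ v in (0:ℝ)..a, f v ≤ M := hM a (abs_of_pos ha).le
    linarith [primitive_le_sub_mul_of_le_neg hf hright hy]
  · rw [abs_of_nonpos hy0] at hy ⊢
    have hleft : ∀ u, a ≤ u → -f (-u) ≤ -c := fun u hu => by
      have := hsign (-u) (by rwa [abs_neg, abs_of_pos (ha.trans_le hu)])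
      simpa [Real.sign_of_neg (neg_neg_of_pos (ha.trans_le hu))] using this
    have hMa' : ∫ v in (0:ℝ)..(-a), f v ≤ M := hM (-a) (by rw [abs_neg, abs_of_pos ha])
    have := primitive_le_sub_mul_of_le_neg (f := fun u => -f (-u)) (by fun_prop) hleft hy
    rw [primitive_neg_comp_neg, primitive_neg_comp_neg, neg_neg] at this
    linarith

lemma one_add_abs_mul_exp_le {a c M F y : ℝ} (ha : 0 ≤ a) (hc : 0 < c)
    (hF : F ≤ M - c * max (|y| - a) 0) :
    (1 + |y|) * Real.exp F ≤ Real.exp M * (1 + a + 1 / c) := by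
  set t := max (|y| - a) 0
  have ht : 0 ≤ t := le_max_right _ _
  have hexp : Real.exp (-(c * t)) ≤ 1 := Real.exp_le_one_iff.2 (by nlinarith)
  calc (1 + |y|) * Real.exp F ≤ (1 + a + t) * Real.exp (M + -(c * t)) := by
        gcongr ?_ * Real.exp ?_
        · linarith [le_max_left (|y| - a) 0]
        · linarith
    _ = Real.exp M * ((1 + a) * Real.exp (-(c * t)) + t * Real.exp (-(c * t))) := by
        rw [Real.exp_add]; ring
    _ ≤ Real.exp M * (1 + a + 1 / c) := by
        gcongr
        · exact mul_le_of_le_one_right (by linarith) hexp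
        · exact mul_exp_neg_mul_le_inv hc t

end Primitive

lemma normConst_nonneg (b : ℝ → ℝ) (σ : ℝ) : 0 ≤ normConst b σ :=
  integral_nonneg fun _ => (Real.exp_pos _).le

lemma invDensity_nonneg (b : ℝ → ℝ) (σ x : ℝ) : 0 ≤ invDensity b σ x :=
  mul_nonneg (inv_nonneg.2 (normConst_nonneg b σ)) (Real.exp_pos _).le

section DriftClass

variable {C A γ σ : ℝ} {b : ℝ → ℝ}

lemma nonneg_of_mem_driftClass (hb : b ∈ driftClass C A γ σ) : 0 ≤ C := by
  simpa using (abs_nonneg _).trans (hb.2.1 0)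

lemma abs_potential_le (hb : b ∈ driftClass C A γ σ) {y : ℝ} (hy : |y| ≤ A) :
    |∫ u in (0:ℝ)..y, 2 * b u / σ ^ 2| ≤ 2 * C * (1 + A) / σ ^ 2 * A := by
  refine abs_primitive_le_of_abs_le (fun u hu => ?_) hy
  have hC := nonneg_of_mem_driftClass hb
  have hbu : |b u| ≤ C * (1 + A) := (hb.2.1 u).trans (by gcongr)
  rw [abs_div, abs_mul, abs_two, abs_of_nonneg (sq_nonneg σ)]
  gcongr ?_ / _
  linarith

lemma potential_le (hb : b ∈ driftClass C A γ σ) (hA : 0 < A) (y : ℝ) :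
    ∫ u in (0:ℝ)..y, 2 * b u / σ ^ 2 ≤
      2 * C * (1 + A) / σ ^ 2 * A - 2 * γ * max (|y| - A) 0 := by
  refine primitive_le_sub_mul_max ((continuous_const.mul hb.1.continuous).div_const _) hA
    (fun u hu => (abs_le.1 (abs_potential_le hb hu)).2) (fun u hu => ?_) y
  have hdrift := hb.2.2 u hu
  calc 2 * b u / σ ^ 2 * Real.sign u = 2 * (b u * Real.sign u / σ ^ 2) := by ring
    _ ≤ -(2 * γ) := by linarith

end DriftClass

theorem stmt0_general (C A γ σ : ℝ) (hA : 0 < A) (hγ : 0 < γ) :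
    ∃ Lstar : ℝ, ∀ b ∈ driftClass C A γ σ, ∀ x : ℝ,
      invDensity b σ x ≤ Lstar ∧ |2 / σ ^ 2 * b x * invDensity b σ x| ≤ Lstar := by
  set M := 2 * C * (1 + A) / σ ^ 2 * A
  set N := (Real.exp (-M) * (2 * A))⁻¹
  set K := Real.exp M * (1 + A + 1 / (2 * γ))
  refine ⟨max (N * Real.exp M) (2 * C / σ ^ 2 * N * K), fun b hb x => ?_⟩
  have hF := potential_le hb hA x
  have hNinv : (normConst b σ)⁻¹ ≤ N :=
    inv_integral_le_of_le_on_Icc hA (Real.exp_pos _) (fun _ => (Real.exp_pos _).le)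
      fun y hy => Real.exp_le_exp.2 (neg_le_of_abs_le (abs_potential_le hb (abs_le.2 hy)))
  constructor
  · refine le_max_of_le_left (mul_le_mul hNinv (Real.exp_le_exp.2 ?_) (Real.exp_pos _).le
      ((inv_nonneg.2 (normConst_nonneg b σ)).trans hNinv))
    nlinarith [le_max_right (|x| - A) 0]
  · have hC := nonneg_of_mem_driftClass hb
    refine le_max_of_le_right ?_
    calc |2 / σ ^ 2 * b x * invDensity b σ x| = 2 / σ ^ 2 * |b x| * invDensity b σ x := by
          rw [abs_mul, abs_mul, abs_of_nonneg (invDensity_nonneg b σ x),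
            abs_of_nonneg (by positivity : (0:ℝ) ≤ 2 / σ ^ 2)]
      _ ≤ 2 / σ ^ 2 * (C * (1 + |x|)) * invDensity b σ x := by
          gcongr
          · exact invDensity_nonneg b σ x
          · exact hb.2.1 x
      _ = 2 * C / σ ^ 2 * (normConst b σ)⁻¹ *
            ((1 + |x|) * Real.exp (∫ u in (0:ℝ)..x, 2 * b u / σ ^ 2)) := by
          rw [invDensity]; ring
      _ ≤ 2 * C / σ ^ 2 * N * K := by
          have := normConst_nonneg b σ
          gcongr
          exact one_add_abs_mul_exp_le hA.le (by positivity) hF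

/-- There is a finite constant `L*` bounding `q_b` and `q_b' = 2σ⁻² b q_b` uniformly over
the drift class. -/
theorem stmt0 (C A γ σ : ℝ) (hC : 1 ≤ C) (hA : 0 < A) (hγ : 0 < γ) (hσ : 0 < σ) :
    ∃ Lstar : ℝ, ∀ b ∈ driftClass C A γ σ, ∀ x : ℝ,
      invDensity b σ x ≤ Lstar ∧ |2 / σ ^ 2 * b x * invDensity b σ x| ≤ Lstar :=
  stmt0_general C A γ σ hA hγ
end

section
/- Let 0 < β ≤ 1 and let f : ℝ → ℝ satisfy |f(x) − f(y)| ≤ |x−y|^β for all x, y ∈ [−1,1] together with f(0) ≥ 1. Then f(x) ≥ 1 − |x|^β for all x ∈ [−1,1]. Consequently, for the kernel K_β(x) = (1 − |x|^β)·1_{|x| ≤ 1}, every such f which is moreover square integrable on ℝ satisfies ∫_ℝ f(x)² dx ≥ ∫_{−1}^{1} (1 − |x|^β)² dx = ‖K_β‖²_{L²}. -/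
open MeasureTheory

/-- The optimal recovery kernel `K_β(x) = (1 - |x|^β)·1_{|x| ≤ 1}` for `0 < β ≤ 1`. -/
noncomputable def optimalKernel (β : ℝ) (x : ℝ) : ℝ :=
  if |x| ≤ 1 then 1 - |x| ^ β else 0

/-- For `0 < β ≤ 1`, any `f` that is `β`-Hölder with constant `1` on `[-1,1]` and satisfies
`f(0) ≥ 1` dominates `1 - |x|^β` pointwise on `[-1,1]`; consequently its squared `L²`-norm
dominates `∫_{-1}^{1} (1-|x|^β)² dx = ‖K_β‖²_{L²}`. -/
theorem stmt7 (β : ℝ) (hβ0 : 0 < β) (hβ1 : β ≤ 1) (f : ℝ → ℝ)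
    (hf : ∀ x ∈ Set.Icc (-1:ℝ) 1, ∀ y ∈ Set.Icc (-1:ℝ) 1, |f x - f y| ≤ |x - y| ^ β)
    (hf0 : 1 ≤ f 0) :
    (∀ x ∈ Set.Icc (-1:ℝ) 1, 1 - |x| ^ β ≤ f x) ∧
    (∫ x in (-1:ℝ)..1, (1 - |x| ^ β) ^ 2) = (∫ x : ℝ, (optimalKernel β x) ^ 2) ∧
    (Integrable (fun x : ℝ => (f x) ^ 2) →
      (∫ x in (-1:ℝ)..1, (1 - |x| ^ β) ^ 2) ≤ ∫ x : ℝ, (f x) ^ 2) := by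
  have hdom : ∀ x ∈ Set.Icc (-1:ℝ) 1, 1 - |x| ^ β ≤ f x := by
    intro x hx
    have h0 : (0:ℝ) ∈ Set.Icc (-1:ℝ) 1 := by constructor <;> norm_num
    have := hf 0 h0 x hx
    have h1 : f 0 - f x ≤ |0 - x| ^ β := (abs_le.mp this).2
    have h2 : |0 - x| = |x| := by rw [zero_sub, abs_neg]
    rw [h2] at h1
    linarith
  have hcont : Continuous (fun x : ℝ => (1 - |x| ^ β) ^ 2) := by
    have : Continuous (fun x : ℝ => |x| ^ β) :=
      continuous_abs.rpow_const (fun x => Or.inr hβ0.le)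
    fun_prop
  have hgnn : ∀ x ∈ Set.Icc (-1:ℝ) 1, 0 ≤ 1 - |x| ^ β := by
    intro x hx
    have : |x| ^ β ≤ 1 :=
      Real.rpow_le_one (abs_nonneg x) (abs_le.mpr ⟨hx.1, hx.2⟩) hβ0.le
    linarith
  have hkey : (∫ x in (-1:ℝ)..1, (1 - |x| ^ β) ^ 2) =
      ∫ x in Set.Icc (-1:ℝ) 1, (1 - |x| ^ β) ^ 2 := by
    rw [intervalIntegral.integral_of_le (by norm_num : (-1:ℝ) ≤ 1),
      MeasureTheory.integral_Icc_eq_integral_Ioc]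
  refine ⟨hdom, ?_, ?_⟩
  · have : (fun x : ℝ => (optimalKernel β x) ^ 2) =
        Set.indicator (Set.Icc (-1:ℝ) 1) (fun x => (1 - |x| ^ β) ^ 2) := by
      funext x
      simp only [optimalKernel, Set.indicator_apply, Set.mem_Icc, ← abs_le]
      split <;> simp
    rw [hkey, this, MeasureTheory.integral_indicator measurableSet_Icc]
  · intro hint
    rw [hkey]
    have hle : ∫ x in Set.Icc (-1:ℝ) 1, (1 - |x| ^ β) ^ 2 ≤
        ∫ x in Set.Icc (-1:ℝ) 1, (f x) ^ 2 := by
      apply setIntegral_mono_on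
      · exact hcont.continuousOn.integrableOn_compact isCompact_Icc
      · exact hint.integrableOn
      · exact measurableSet_Icc
      · intro x hx
        have h1 := hgnn x hx
        have h2 := hdom x hx
        have : 0 ≤ f x := le_trans h1 h2
        exact pow_le_pow_left₀ h1 h2 2
    refine hle.trans (setIntegral_le_integral hint ?_)
    filter_upwards with x
    positivity
end

section
/- Let 0 < β < 1 and T ≥ 1, and define the truncated kernel K_T^β : ℝ → ℝ by K_T^β(x) = 1 − |x|^β for 1/T ≤ |x| ≤ 1, K_T^β(x) = 1 − T^{−β} for |x| < 1/T, and K_T^β(x) = 0 for |x| > 1. Then: (i) K_T^β is Lipschitz continuous with Lipschitz constant max(1, β·T^{1−β}); (ii) |K_T^β(x) − K_T^β(y)| ≤ |x−y|^β for all x, y ∈ ℝ; (iii) |‖K_T^β‖²_{L²} − ‖K_β‖²_{L²}| ≤ √8·‖K_β‖_{L²}·T^{−1/2−β}, where K_β(x) = (1 − |x|^β)·1_{|x| ≤ 1}. -/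
open MeasureTheory

/-- The truncated kernel `K_T^β`: equal to `1 - |x|^β` for `1/T ≤ |x| ≤ 1`, to `1 - T^{-β}`
for `|x| < 1/T`, and to `0` for `|x| > 1`. -/
noncomputable def truncKernel (β T : ℝ) (x : ℝ) : ℝ :=
  if 1 < |x| then 0 else if |x| < 1 / T then 1 - T ^ (-β) else 1 - |x| ^ β


/-!
For `T ≥ 1` the truncated kernel is the optimal one evaluated at `max T⁻¹ |x|`, a 1-Lipschitz
function of `x` with values in `[T⁻¹, ∞)`. Both regularity bounds therefore come from the
subadditivity of `t ↦ t ^ β` and its Lipschitz bound `β c ^ (β - 1)` on `[c, ∞)`. The two kernels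
differ by at most `T ^ (-β)`, and only on `[-T⁻¹, T⁻¹]`, so `‖K - K_T‖₂ ≤ √2 T ^ (-1/2 - β)`; since
`0 ≤ K_T ≤ K`, Cauchy–Schwarz gives `‖K‖₂² - ‖K_T‖₂² ≤ ‖K - K_T‖₂ ‖K + K_T‖₂ ≤ 2 ‖K‖₂ ‖K - K_T‖₂`.
-/

open Set

namespace Real

theorem rpow_sub_rpow_le_rpow_sub {β s t : ℝ} (hβ0 : 0 ≤ β) (hβ1 : β ≤ 1) (hs : 0 ≤ s)
    (hst : s ≤ t) : t ^ β - s ^ β ≤ (t - s) ^ β := by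
  have h := rpow_add_le_add_rpow hs (sub_nonneg.2 hst) hβ0 hβ1
  rw [add_sub_cancel] at h
  linarith

theorem abs_rpow_sub_rpow_le_rpow_abs_sub {β s t : ℝ} (hβ0 : 0 ≤ β) (hβ1 : β ≤ 1) (hs : 0 ≤ s)
    (ht : 0 ≤ t) : |s ^ β - t ^ β| ≤ |s - t| ^ β := by
  wlog hst : s ≤ t generalizing s t
  · rw [abs_sub_comm, abs_sub_comm s]
    exact this ht hs (le_of_not_ge hst)
  rw [abs_sub_comm, abs_of_nonneg (sub_nonneg.2 (rpow_le_rpow hs hst hβ0)), abs_sub_comm,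
    abs_of_nonneg (sub_nonneg.2 hst)]
  exact rpow_sub_rpow_le_rpow_sub hβ0 hβ1 hs hst

theorem rpow_sub_rpow_le_mul_sub {β c s t : ℝ} (hβ0 : 0 ≤ β) (hβ1 : β ≤ 1) (hc : 0 < c)
    (hcs : c ≤ s) (hst : s ≤ t) : t ^ β - s ^ β ≤ β * c ^ (β - 1) * (t - s) := by
  have hs : 0 < s := hc.trans_le hcs
  have hrel : 0 ≤ (t - s) / s := div_nonneg (sub_nonneg.2 hst) hs.le
  have hbernoulli : t ^ β ≤ s ^ β + β * s ^ (β - 1) * (t - s) :=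
    calc t ^ β = s ^ β * (1 + (t - s) / s) ^ β := by
          rw [← mul_rpow hs.le (by positivity)]
          congr 1
          field_simp
          ring
      _ ≤ s ^ β * (1 + β * ((t - s) / s)) := by
          gcongr
          exact rpow_one_add_le_one_add_mul_self (by linarith) hβ0 hβ1
      _ = s ^ β + β * s ^ (β - 1) * (t - s) := by
          rw [rpow_sub_one hs.ne']
          field_simp
  have hslope : s ^ (β - 1) ≤ c ^ (β - 1) := rpow_le_rpow_of_nonpos hc hcs (by linarith)
  have := mul_le_mul_of_nonneg_right (mul_le_mul_of_nonneg_left hslope hβ0) (sub_nonneg.2 hst)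
  linarith

theorem abs_rpow_sub_rpow_le_mul_abs_sub {β c s t : ℝ} (hβ0 : 0 ≤ β) (hβ1 : β ≤ 1) (hc : 0 < c)
    (hs : c ≤ s) (ht : c ≤ t) : |s ^ β - t ^ β| ≤ β * c ^ (β - 1) * |s - t| := by
  wlog hst : s ≤ t generalizing s t
  · rw [abs_sub_comm, abs_sub_comm s]
    exact this ht hs (le_of_not_ge hst)
  rw [abs_sub_comm, abs_of_nonneg (sub_nonneg.2 (rpow_le_rpow (hc.le.trans hs) hst hβ0)),
    abs_sub_comm, abs_of_nonneg (sub_nonneg.2 hst)]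
  exact rpow_sub_rpow_le_mul_sub hβ0 hβ1 hc hs hst

end Real

theorem abs_max_abs_sub_max_abs_le (c x y : ℝ) : |max c (|x|) - max c (|y|)| ≤ |x - y| := by
  rw [max_comm c, max_comm c]
  exact (abs_max_sub_max_le_abs _ _ _).trans (abs_abs_sub_abs_le_abs_sub x y)

section SquareIntegral

variable {α : Type*} [MeasurableSpace α] {μ : Measure α}

theorem integral_sq_sub_integral_sq_le {f g : α → ℝ} (hf : MemLp f 2 μ) (hg : MemLp g 2 μ)
    (hg0 : 0 ≤ᵐ[μ] g) (hgf : g ≤ᵐ[μ] f) :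
    ∫ a, f a ^ 2 ∂μ - ∫ a, g a ^ 2 ∂μ ≤
      2 * √(∫ a, f a ^ 2 ∂μ) * √(∫ a, (f a - g a) ^ 2 ∂μ) := by
  have hdiff : ∫ a, f a ^ 2 ∂μ - ∫ a, g a ^ 2 ∂μ = ∫ a, (f a - g a) * (f a + g a) ∂μ := by
    rw [← integral_sub hf.integrable_sq hg.integrable_sq]
    exact integral_congr_ae (ae_of_all _ fun a => by ring)
  have hcs := integral_mul_le_Lp_mul_Lq_of_nonneg (μ := μ) (f := fun a => f a - g a)
    (g := fun a => f a + g a) Real.HolderConjugate.two_two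
    (hgf.mono fun a h => sub_nonneg.2 h)
    (by filter_upwards [hg0, hgf] with a (h0 : 0 ≤ g a) h1; exact add_nonneg (h0.trans h1) h0)
    (by rw [ENNReal.ofReal_ofNat]; exact hf.sub hg) (by rw [ENNReal.ofReal_ofNat]; exact hf.add hg)
  simp only [Real.rpow_two, ← Real.sqrt_eq_rpow] at hcs
  have hsum : ∫ a, (f a + g a) ^ 2 ∂μ ≤ 2 ^ 2 * ∫ a, f a ^ 2 ∂μ := by
    rw [← integral_const_mul]
    refine integral_mono_ae (hf.add hg).integrable_sq (hf.integrable_sq.const_mul _) ?_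
    filter_upwards [hg0, hgf] with a (h0 : 0 ≤ g a) h1
    nlinarith
  have hsqrt : √(∫ a, (f a + g a) ^ 2 ∂μ) ≤ 2 * √(∫ a, f a ^ 2 ∂μ) := by
    have hf2 : 0 ≤ ∫ a, f a ^ 2 ∂μ := integral_nonneg fun a => sq_nonneg (f a)
    simpa [Real.sqrt_mul', hf2] using Real.sqrt_le_sqrt hsum
  rw [hdiff]
  calc _ ≤ √(∫ a, (f a - g a) ^ 2 ∂μ) * √(∫ a, (f a + g a) ^ 2 ∂μ) := hcs
    _ ≤ √(∫ a, (f a - g a) ^ 2 ∂μ) * (2 * √(∫ a, f a ^ 2 ∂μ)) := by gcongr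
    _ = _ := by ring

theorem integral_sq_le_of_abs_le_of_eq_zero {f : α → ℝ} {s : Set α} {M : ℝ} (hs : μ s < ⊤)
    (hM : ∀ a ∈ s, |f a| ≤ M) (hzero : ∀ a ∉ s, f a = 0) :
    ∫ a, f a ^ 2 ∂μ ≤ M ^ 2 * μ.real s := by
  rw [← setIntegral_eq_integral_of_forall_compl_eq_zero fun a ha => by simp [hzero a ha]]
  refine (Real.le_norm_self _).trans (norm_setIntegral_le_of_norm_le_const hs fun a ha => ?_)
  rw [Real.norm_eq_abs, abs_pow]
  exact pow_le_pow_left₀ (abs_nonneg _) (hM a ha) 2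

end SquareIntegral

section Kernels

variable {β T : ℝ}

theorem optimalKernel_eq_max (hβ : 0 ≤ β) (x : ℝ) :
    optimalKernel β x = max 0 (1 - |x| ^ β) := by
  unfold optimalKernel
  split_ifs with h
  · rw [max_eq_right (sub_nonneg.2 (Real.rpow_le_one (abs_nonneg x) h hβ))]
  · rw [max_eq_left (sub_nonpos.2 (Real.one_le_rpow (not_le.1 h).le hβ))]

theorem optimalKernel_nonneg (hβ : 0 ≤ β) (x : ℝ) : 0 ≤ optimalKernel β x :=
  optimalKernel_eq_max hβ x ▸ le_max_left _ _

theorem optimalKernel_abs (x : ℝ) : optimalKernel β |x| = optimalKernel β x := by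
  simp only [optimalKernel, abs_abs]

theorem optimalKernel_le_of_abs_le (hβ : 0 ≤ β) {x y : ℝ} (hxy : |x| ≤ |y|) :
    optimalKernel β y ≤ optimalKernel β x := by
  rw [optimalKernel_eq_max hβ, optimalKernel_eq_max hβ]
  gcongr

theorem optimalKernel_of_one_lt_abs {x : ℝ} (hx : 1 < |x|) : optimalKernel β x = 0 :=
  if_neg hx.not_ge

theorem abs_optimalKernel_sub_le (hβ : 0 ≤ β) (x y : ℝ) :
    |optimalKernel β x - optimalKernel β y| ≤ |(|x|) ^ β - (|y|) ^ β| := by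
  rw [optimalKernel_eq_max hβ, optimalKernel_eq_max hβ, max_comm 0, max_comm 0]
  refine (abs_max_sub_max_le_abs _ _ _).trans_eq ?_
  rw [abs_sub_comm]
  ring_nf

theorem abs_optimalKernel_sub_le_rpow (hβ0 : 0 ≤ β) (hβ1 : β ≤ 1) (x y : ℝ) :
    |optimalKernel β x - optimalKernel β y| ≤ |x - y| ^ β :=
  calc _ ≤ |(|x|) ^ β - (|y|) ^ β| := abs_optimalKernel_sub_le hβ0 x y
    _ ≤ |(|x|) - (|y|)| ^ β :=
        Real.abs_rpow_sub_rpow_le_rpow_abs_sub hβ0 hβ1 (abs_nonneg x) (abs_nonneg y)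
    _ ≤ |x - y| ^ β := Real.rpow_le_rpow (abs_nonneg _) (abs_abs_sub_abs_le_abs_sub x y) hβ0

theorem abs_optimalKernel_sub_le_mul (hβ0 : 0 ≤ β) (hβ1 : β ≤ 1) {c x y : ℝ} (hc : 0 < c)
    (hx : c ≤ |x|) (hy : c ≤ |y|) :
    |optimalKernel β x - optimalKernel β y| ≤ β * c ^ (β - 1) * |(|x|) - (|y|)| :=
  (abs_optimalKernel_sub_le hβ0 x y).trans
    (Real.abs_rpow_sub_rpow_le_mul_abs_sub hβ0 hβ1 hc hx hy)

theorem continuous_optimalKernel (hβ : 0 ≤ β) : Continuous (optimalKernel β) := by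
  simp only [funext (optimalKernel_eq_max hβ)]
  fun_prop (disch := exact fun _ => Or.inr hβ)

theorem hasCompactSupport_optimalKernel : HasCompactSupport (optimalKernel β) :=
  .intro (isCompact_closedBall (0 : ℝ) 1) fun x hx =>
    optimalKernel_of_one_lt_abs (by simpa using hx)

theorem memLp_optimalKernel (hβ : 0 ≤ β) : MemLp (optimalKernel β) 2 :=
  (continuous_optimalKernel hβ).memLp_of_hasCompactSupport hasCompactSupport_optimalKernel

theorem truncKernel_eq_optimalKernel_max (hT : 1 ≤ T) (x : ℝ) :
    truncKernel β T x = optimalKernel β (max T⁻¹ |x|) := by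
  have hT0 : 0 < T := zero_lt_one.trans_le hT
  have hinv : T⁻¹ ≤ 1 := inv_le_one_of_one_le₀ hT
  rcases le_total T⁻¹ |x| with h | h
  · rw [max_eq_right h, optimalKernel_abs]
    simp only [truncKernel, optimalKernel, one_div, not_lt.2 h, if_false]
    split_ifs <;> first | rfl | linarith
  · rw [max_eq_left h]
    simp only [truncKernel, optimalKernel, one_div, abs_of_pos (inv_pos.2 hT0), hinv,
      if_true, not_lt.2 (h.trans hinv), if_false, Real.inv_rpow hT0.le, Real.rpow_neg hT0.le]
    split_ifs with hlt
    · rfl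
    · rw [le_antisymm h (not_lt.1 hlt), Real.inv_rpow hT0.le]

theorem truncKernel_of_one_lt_abs {x : ℝ} (hx : 1 < |x|) : truncKernel β T x = 0 :=
  if_pos hx

theorem truncKernel_of_inv_le_abs (hT : 1 ≤ T) {x : ℝ} (hx : T⁻¹ ≤ |x|) :
    truncKernel β T x = optimalKernel β x := by
  rw [truncKernel_eq_optimalKernel_max hT, max_eq_right hx, optimalKernel_abs]

theorem truncKernel_nonneg (hβ : 0 ≤ β) (hT : 1 ≤ T) (x : ℝ) : 0 ≤ truncKernel β T x :=
  truncKernel_eq_optimalKernel_max hT x ▸ optimalKernel_nonneg hβ _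

theorem truncKernel_le_optimalKernel (hβ : 0 ≤ β) (hT : 1 ≤ T) (x : ℝ) :
    truncKernel β T x ≤ optimalKernel β x :=
  truncKernel_eq_optimalKernel_max hT x ▸
    optimalKernel_le_of_abs_le hβ ((le_max_right _ _).trans (le_abs_self _))

theorem continuous_truncKernel (hβ : 0 ≤ β) (hT : 1 ≤ T) : Continuous (truncKernel β T) := by
  simp only [funext (truncKernel_eq_optimalKernel_max hT)]
  exact (continuous_optimalKernel hβ).comp (by fun_prop)

theorem memLp_truncKernel (hβ : 0 ≤ β) (hT : 1 ≤ T) : MemLp (truncKernel β T) 2 :=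
  (continuous_truncKernel hβ hT).memLp_of_hasCompactSupport <|
    .intro (isCompact_closedBall (0 : ℝ) 1) fun x hx =>
      truncKernel_of_one_lt_abs (by simpa using hx)

theorem abs_truncKernel_sub_le_mul (hβ0 : 0 ≤ β) (hβ1 : β ≤ 1) (hT : 1 ≤ T) (x y : ℝ) :
    |truncKernel β T x - truncKernel β T y| ≤ β * T ^ (1 - β) * |x - y| := by
  have hT0 : 0 < T := zero_lt_one.trans_le hT
  have hinv : 0 < T⁻¹ := inv_pos.2 hT0
  have hbound := abs_optimalKernel_sub_le_mul (β := β) hβ0 hβ1 hinv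
    ((le_max_left T⁻¹ |x|).trans (le_abs_self _)) ((le_max_left T⁻¹ |y|).trans (le_abs_self _))
  rw [abs_of_pos (hinv.trans_le (le_max_left _ _)), abs_of_pos (hinv.trans_le (le_max_left _ _)),
    Real.inv_rpow hT0.le, ← Real.rpow_neg hT0.le, neg_sub] at hbound
  rw [truncKernel_eq_optimalKernel_max hT, truncKernel_eq_optimalKernel_max hT]
  exact hbound.trans (mul_le_mul_of_nonneg_left (abs_max_abs_sub_max_abs_le _ _ _) (by positivity))

theorem abs_truncKernel_sub_le_rpow (hβ0 : 0 ≤ β) (hβ1 : β ≤ 1) (hT : 1 ≤ T) (x y : ℝ) :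
    |truncKernel β T x - truncKernel β T y| ≤ |x - y| ^ β := by
  rw [truncKernel_eq_optimalKernel_max hT, truncKernel_eq_optimalKernel_max hT]
  exact (abs_optimalKernel_sub_le_rpow hβ0 hβ1 _ _).trans
    (Real.rpow_le_rpow (abs_nonneg _) (abs_max_abs_sub_max_abs_le _ _ _) hβ0)

theorem abs_optimalKernel_sub_truncKernel_le (hβ0 : 0 ≤ β) (hβ1 : β ≤ 1) (hT : 1 ≤ T) (x : ℝ) :
    |optimalKernel β x - truncKernel β T x| ≤ T ^ (-β) := by
  have hT0 : 0 < T := zero_lt_one.trans_le hT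
  have hshift : |(|x|) - max T⁻¹ (|x|)| ≤ T⁻¹ := by
    rw [abs_sub_comm, abs_of_nonneg (sub_nonneg.2 (le_max_right _ _)), sub_le_iff_le_add]
    exact max_le (le_add_of_nonneg_right (abs_nonneg x)) (le_add_of_nonneg_left (by positivity))
  rw [truncKernel_eq_optimalKernel_max hT, ← optimalKernel_abs x, Real.rpow_neg hT0.le,
    ← Real.inv_rpow hT0.le]
  exact (abs_optimalKernel_sub_le_rpow hβ0 hβ1 _ _).trans
    (Real.rpow_le_rpow (abs_nonneg _) hshift hβ0)

theorem integral_sq_truncKernel_le (hβ : 0 ≤ β) (hT : 1 ≤ T) :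
    ∫ x, truncKernel β T x ^ 2 ≤ ∫ x, optimalKernel β x ^ 2 :=
  integral_mono (memLp_truncKernel hβ hT).integrable_sq (memLp_optimalKernel hβ).integrable_sq
    fun x => pow_le_pow_left₀ (truncKernel_nonneg hβ hT x) (truncKernel_le_optimalKernel hβ hT x) 2

theorem sqrt_integral_sq_optimalKernel_sub_truncKernel_le (hβ0 : 0 ≤ β) (hβ1 : β ≤ 1)
    (hT : 1 ≤ T) :
    √(∫ x, (optimalKernel β x - truncKernel β T x) ^ 2) ≤ √2 * T ^ (-(1 / 2 : ℝ) - β) := by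
  have hT0 : 0 < T := zero_lt_one.trans_le hT
  have hbound := integral_sq_le_of_abs_le_of_eq_zero (μ := volume) (s := Icc (-T⁻¹) T⁻¹)
    measure_Icc_lt_top (fun x _ => abs_optimalKernel_sub_truncKernel_le hβ0 hβ1 hT x)
    fun x hx => by
      rw [truncKernel_of_inv_le_abs hT (not_lt.1 fun h => hx (abs_le.1 h.le)), sub_self]
  have hexp : (T ^ (-β)) ^ 2 * (2 * T⁻¹) = (√2 * T ^ (-(1 / 2 : ℝ) - β)) ^ 2 := by
    rw [mul_pow, Real.sq_sqrt zero_le_two, ← Real.rpow_neg_one, ← Real.rpow_mul_natCast hT0.le,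
      ← Real.rpow_mul_natCast hT0.le, mul_left_comm, ← Real.rpow_add hT0]
    congr 2
    ring
  rw [Real.volume_real_Icc_of_le (by linarith [inv_pos.2 hT0]), sub_neg_eq_add, ← two_mul,
    hexp] at hbound
  exact (Real.sqrt_le_sqrt hbound).trans_eq (Real.sqrt_sq (by positivity))

end Kernels

/-- Properties of the truncated kernel `K_T^β` (Lemma F.1 of the paper): it is Lipschitz
with constant `max 1 (β T^{1-β})`, belongs to `H(β,1)`, and its squared `L²`-norm is close
to that of `K_β`. -/
theorem stmt8 (β T : ℝ) (hβ0 : 0 < β) (hβ1 : β < 1) (hT : 1 ≤ T) :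
    (∀ x y : ℝ, |truncKernel β T x - truncKernel β T y| ≤ max 1 (β * T ^ (1 - β)) * |x - y|) ∧
    (∀ x y : ℝ, |truncKernel β T x - truncKernel β T y| ≤ |x - y| ^ β) ∧
    |(∫ x : ℝ, (truncKernel β T x) ^ 2) - (∫ x : ℝ, (optimalKernel β x) ^ 2)| ≤
      Real.sqrt 8 * Real.sqrt (∫ x : ℝ, (optimalKernel β x) ^ 2) * T ^ (-(1/2 : ℝ) - β) := by
  refine ⟨fun x y => ?_, abs_truncKernel_sub_le_rpow hβ0.le hβ1.le hT, ?_⟩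
  · exact (abs_truncKernel_sub_le_mul hβ0.le hβ1.le hT x y).trans
      (mul_le_mul_of_nonneg_right (le_max_right _ _) (abs_nonneg _))
  have hsqrt8 : √8 = 2 * √2 := by
    rw [show (8 : ℝ) = 2 ^ 2 * 2 by norm_num, Real.sqrt_mul (by norm_num), Real.sqrt_sq zero_le_two]
  rw [abs_sub_comm, abs_of_nonneg (sub_nonneg.2 (integral_sq_truncKernel_le hβ0.le hT))]
  calc _ ≤ 2 * √(∫ x, optimalKernel β x ^ 2) *
          √(∫ x, (optimalKernel β x - truncKernel β T x) ^ 2) :=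
        integral_sq_sub_integral_sq_le (memLp_optimalKernel hβ0.le) (memLp_truncKernel hβ0.le hT)
          (ae_of_all _ (truncKernel_nonneg hβ0.le hT))
          (ae_of_all _ (truncKernel_le_optimalKernel hβ0.le hT))
    _ ≤ 2 * √(∫ x, optimalKernel β x ^ 2) * (√2 * T ^ (-(1 / 2 : ℝ) - β)) := by
        gcongr
        exact sqrt_integral_sq_optimalKernel_sub_truncKernel_le hβ0.le hβ1.le hT
    _ = _ := by rw [hsqrt8]; ring
end

section
/- Let σ > 0 and let b, g : ℝ → ℝ be measurable and locally integrable functions with g ∈ L¹(ℝ), and assume that both normalizing constants C_{b,σ} = ∫_ℝ exp(∫₀ˣ 2b(u)/σ² du) dx and C_{b+g,σ} = ∫_ℝ exp(∫₀ˣ 2(b(u)+g(u))/σ² du) dx are finite. Then for every x ∈ ℝ, q_{b+g}(x)/q_b(x) ≤ exp(4·σ⁻²·‖g‖_{L¹}); in particular sup_{x∈ℝ} q_{b+g}(x)/q_b(x) ≤ exp(4·σ⁻²·‖g‖_{L¹}). -/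
/-!
Writing `V(x) = ∫₀ˣ 2b/σ²` and `W(x) = ∫₀ˣ 2(b+g)/σ²`, the difference `W - V = ∫₀ˣ 2g/σ²` is bounded
in absolute value by `K = 2σ⁻²‖g‖_{L¹}` uniformly in `x`. Hence `∫ e^V ≤ e^K ∫ e^W`, and
`q_{b+g}(x)/q_b(x) = (∫ e^V / ∫ e^W) · e^{W(x) - V(x)} ≤ e^K · e^K`.
-/

open MeasureTheory

theorem norm_intervalIntegral_le_integral_norm {E : Type*} [NormedAddCommGroup E]
    [NormedSpace ℝ E] {μ : Measure ℝ} {f : ℝ → E} (hf : Integrable f μ) (a b : ℝ) :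
    ‖∫ x in a..b, f x ∂μ‖ ≤ ∫ x, ‖f x‖ ∂μ :=
  intervalIntegral.norm_integral_le_integral_norm_uIoc.trans
    (setIntegral_le_integral hf.norm (ae_of_all _ fun _ => norm_nonneg _))

theorem integral_exp_le_exp_mul_integral_exp {α : Type*} [MeasurableSpace α] {μ : Measure α}
    {V W : α → ℝ} {K : ℝ} (hV : Integrable (fun x => Real.exp (V x)) μ)
    (hW : Integrable (fun x => Real.exp (W x)) μ) (hVW : ∀ x, V x ≤ W x + K) :
    ∫ x, Real.exp (V x) ∂μ ≤ Real.exp K * ∫ x, Real.exp (W x) ∂μ := by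
  rw [← integral_const_mul]
  refine integral_mono hV (hW.const_mul _) fun x => ?_
  simpa only [← Real.exp_add, Real.exp_le_exp, add_comm K] using hVW x

theorem gibbs_density_div_le {α : Type*} [MeasurableSpace α] {μ : Measure α} [NeZero μ]
    {V W : α → ℝ} {K : ℝ} (hV : Integrable (fun x => Real.exp (V x)) μ)
    (hW : Integrable (fun x => Real.exp (W x)) μ) (hVW : ∀ x, |W x - V x| ≤ K) (x : α) :
    (∫ y, Real.exp (W y) ∂μ)⁻¹ * Real.exp (W x) / ((∫ y, Real.exp (V y) ∂μ)⁻¹ * Real.exp (V x))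
      ≤ Real.exp (2 * K) := by
  have hZW := integral_exp_pos hW
  have hZV := integral_exp_pos hV
  have hZ : (∫ y, Real.exp (V y) ∂μ) / ∫ y, Real.exp (W y) ∂μ ≤ Real.exp K :=
    (div_le_iff₀ hZW).2 <| integral_exp_le_exp_mul_integral_exp hV hW fun y => by
      linarith [(abs_le.1 (hVW y)).1]
  have hx : Real.exp (W x - V x) ≤ Real.exp K := Real.exp_le_exp.2 (abs_le.1 (hVW x)).2
  calc (∫ y, Real.exp (W y) ∂μ)⁻¹ * Real.exp (W x) / ((∫ y, Real.exp (V y) ∂μ)⁻¹ * Real.exp (V x))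
      = (∫ y, Real.exp (V y) ∂μ) / (∫ y, Real.exp (W y) ∂μ) * Real.exp (W x - V x) := by
        rw [Real.exp_sub]; field_simp
    _ ≤ Real.exp K * Real.exp K := by gcongr
    _ = Real.exp (2 * K) := by rw [← Real.exp_add, two_mul]

theorem stmt9_general (σ : ℝ) (b g : ℝ → ℝ)
    (hbl : LocallyIntegrable b)
    (hg1 : Integrable g)
    (hCb : Integrable fun x : ℝ => Real.exp (∫ u in (0:ℝ)..x, 2 * b u / σ ^ 2))
    (hCbg : Integrable fun x : ℝ => Real.exp (∫ u in (0:ℝ)..x, 2 * (b u + g u) / σ ^ 2)) :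
    (∀ x : ℝ, invDensity (fun u => b u + g u) σ x / invDensity b σ x ≤
      Real.exp (4 / σ ^ 2 * ∫ u : ℝ, |g u|)) ∧
    (⨆ x : ℝ, invDensity (fun u => b u + g u) σ x / invDensity b σ x) ≤
      Real.exp (4 / σ ^ 2 * ∫ u : ℝ, |g u|) := by
  have hdiff : ∀ x : ℝ, |(∫ u in (0:ℝ)..x, 2 * (b u + g u) / σ ^ 2) -
      ∫ u in (0:ℝ)..x, 2 * b u / σ ^ 2| ≤ 2 / σ ^ 2 * ∫ u, |g u| := by
    intro x
    have hb : IntervalIntegrable b volume 0 x :=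
      (hbl.integrableOn_isCompact isCompact_uIcc).intervalIntegrable
    simp only [mul_add, add_div]
    rw [intervalIntegral.integral_add ((hb.const_mul 2).div_const _)
      ((hg1.intervalIntegrable.const_mul 2).div_const _), add_sub_cancel_left]
    simp only [mul_div_right_comm _ _ (σ ^ 2), intervalIntegral.integral_const_mul, abs_mul]
    rw [abs_of_nonneg (by positivity)]
    gcongr
    exact norm_intervalIntegral_le_integral_norm hg1 0 x
  have hratio : ∀ x : ℝ, invDensity (fun u => b u + g u) σ x / invDensity b σ x ≤
      Real.exp (4 / σ ^ 2 * ∫ u : ℝ, |g u|) := fun x =>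
    (gibbs_density_div_le hCb hCbg hdiff x).trans_eq (by ring_nf)
  exact ⟨hratio, ciSup_le hratio⟩

/-- Perturbation bound for the ratio of invariant densities:
`q_{b+g}(x)/q_b(x) ≤ exp(4 σ⁻² ‖g‖_{L¹})` for every `x`, and hence for the supremum. -/
theorem stmt9 (σ : ℝ) (hσ : 0 < σ) (b g : ℝ → ℝ)
    (hbm : Measurable b) (hgm : Measurable g)
    (hbl : LocallyIntegrable b) (hgl : LocallyIntegrable g)
    (hg1 : Integrable g)
    (hCb : Integrable fun x : ℝ => Real.exp (∫ u in (0:ℝ)..x, 2 * b u / σ ^ 2))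
    (hCbg : Integrable fun x : ℝ => Real.exp (∫ u in (0:ℝ)..x, 2 * (b u + g u) / σ ^ 2)) :
    (∀ x : ℝ, invDensity (fun u => b u + g u) σ x / invDensity b σ x ≤
      Real.exp (4 / σ ^ 2 * ∫ u : ℝ, |g u|)) ∧
    (⨆ x : ℝ, invDensity (fun u => b u + g u) σ x / invDensity b σ x) ≤
      Real.exp (4 / σ ^ 2 * ∫ u : ℝ, |g u|) :=
  stmt9_general σ b g hbl hg1 hCb hCbg
end

section
/- Let (E,d) be a separable metric space, Θ a parameter set, Ω a measurable space carrying a family of probability measures (P_θ)_{θ∈Θ} with expectations E_θ, let X_n, X : Ω → E (n ∈ ℕ) be Borel measurable, and let h : E → ℝ be Lipschitz continuous. If sup_{θ∈Θ} d_BL^θ(X_n, X) → 0 as n → ∞, then sup_{θ∈Θ} sup_{f∈F_BL(ℝ)} |E_θ[f(h(X_n))] − E_θ[f(h(X))]| → 0 as n → ∞, i.e. h(X_n) converges to h(X) weakly uniformly over Θ. -/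
open MeasureTheory

/-- The unit ball `F_BL(E)` of bounded Lipschitz functions:
`sup |f| + Lip(f) ≤ 1`. -/
def FBL (E : Type*) [PseudoMetricSpace E] : Set (E → ℝ) :=
  {f | ∃ a L : ℝ, 0 ≤ a ∧ 0 ≤ L ∧ a + L ≤ 1 ∧ (∀ x, |f x| ≤ a) ∧
    ∀ x y, |f x - f y| ≤ L * dist x y}

/-- Uniform continuous mapping theorem for uniform weak convergence: if
`sup_θ d_BL^θ(X_n, X) → 0` and `h` is Lipschitz, then
`sup_θ d_BL^θ(h(X_n), h(X)) → 0`. -/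
theorem stmt11 {E Ω Θ : Type*} [MetricSpace E] [TopologicalSpace.SeparableSpace E]
    [MeasurableSpace E] [BorelSpace E] [MeasurableSpace Ω]
    (P : Θ → Measure Ω) (hP : ∀ θ, IsProbabilityMeasure (P θ))
    (X : ℕ → Ω → E) (X₀ : Ω → E)
    (hX : ∀ n, Measurable (X n)) (hX₀ : Measurable X₀)
    (h : E → ℝ) (hh : ∃ L : ℝ, 0 ≤ L ∧ ∀ x y, |h x - h y| ≤ L * dist x y)
    (hconv : ∀ ε : ℝ, 0 < ε → ∃ N, ∀ n ≥ N, ∀ θ, ∀ f ∈ FBL E,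
      |(∫ ω, f (X n ω) ∂(P θ)) - (∫ ω, f (X₀ ω) ∂(P θ))| ≤ ε) :
    ∀ ε : ℝ, 0 < ε → ∃ N, ∀ n ≥ N, ∀ θ, ∀ f ∈ FBL ℝ,
      |(∫ ω, f (h (X n ω)) ∂(P θ)) - (∫ ω, f (h (X₀ ω)) ∂(P θ))| ≤ ε := by
  obtain ⟨Lh, hLh0, hLip⟩ := hh
  intro ε hε
  set C : ℝ := max 1 Lh with hC
  have hC1 : (1:ℝ) ≤ C := le_max_left _ _
  have hC0 : (0:ℝ) < C := lt_of_lt_of_le one_pos hC1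
  obtain ⟨N, hN⟩ := hconv (ε / C) (div_pos hε hC0)
  refine ⟨N, fun n hn θ f hf => ?_⟩
  obtain ⟨a, L, ha0, hL0, haL, hfa, hfL⟩ := hf
  have hg : (fun x => f (h x) / C) ∈ FBL E := by
    refine ⟨a, L, ha0, hL0, haL, fun x => ?_, fun x y => ?_⟩
    · rw [abs_div, abs_of_pos hC0]
      calc |f (h x)| / C ≤ a / C := by gcongr; exact hfa _
        _ ≤ a / 1 := by gcongr
        _ = a := div_one a
    · rw [div_sub_div_same, abs_div, abs_of_pos hC0, div_le_iff₀ hC0]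
      calc |f (h x) - f (h y)| ≤ L * dist (h x) (h y) := hfL _ _
        _ ≤ L * (Lh * dist x y) := by
            gcongr
            rw [Real.dist_eq]; exact hLip x y
        _ ≤ L * (C * dist x y) := by gcongr; exact le_max_right _ _
        _ = L * dist x y * C := by ring
  have key := hN n hn θ _ hg
  have h1 : (∫ ω, f (h (X n ω)) / C ∂(P θ)) = (∫ ω, f (h (X n ω)) ∂(P θ)) / C :=
    integral_div _ _
  have h2 : (∫ ω, f (h (X₀ ω)) / C ∂(P θ)) = (∫ ω, f (h (X₀ ω)) ∂(P θ)) / C :=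
    integral_div _ _
  rw [h1, h2, div_sub_div_same, abs_div, abs_of_pos hC0, div_le_div_iff₀ hC0 hC0] at key
  have := key
  nlinarith [abs_nonneg ((∫ ω, f (h (X n ω)) ∂(P θ)) - (∫ ω, f (h (X₀ ω)) ∂(P θ)))]
end

section
/- Let (E,d) be a separable metric space, Θ a parameter set, Ω a measurable space carrying a family of probability measures (P_θ)_{θ∈Θ} with expectations E_θ, and let X_n, Y_n, X : Ω → E (n ∈ ℕ) be Borel measurable. Assume: (a) for every ε > 0, sup_{θ∈Θ} P_θ( d(X_n, Y_n) > ε ) → 0 as n → ∞; and (b) sup_{θ∈Θ} d_BL^θ(X_n, X) → 0 as n → ∞. Then sup_{θ∈Θ} d_BL^θ(Y_n, X) → 0 as n → ∞. -/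
open MeasureTheory
open scoped ENNReal

/-!
A function in `F_BL` moves by at most `δ` where `d(X_n, Y_n) ≤ δ` and by at most `2`
elsewhere, so `|E f(Y_n) - E f(X_n)| ≤ 2 P(d(X_n, Y_n) > δ) + δ` uniformly in `θ` and `f`.
The triangle inequality through `E f(X_n)` then transfers the uniform convergence from
`X_n` to `Y_n`.
-/

namespace FBL

variable {E : Type*} [MetricSpace E] {f : E → ℝ}

theorem abs_le_one (hf : f ∈ FBL E) (x : E) : |f x| ≤ 1 := by
  obtain ⟨a, L, -, hL, haL, hfa, -⟩ := hf
  linarith [hfa x]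

theorem abs_sub_le_dist (hf : f ∈ FBL E) (x y : E) : |f x - f y| ≤ dist x y := by
  obtain ⟨a, L, ha, -, haL, -, hfL⟩ := hf
  calc |f x - f y| ≤ L * dist x y := hfL x y
    _ ≤ 1 * dist x y := by gcongr; linarith
    _ = dist x y := one_mul _

theorem lipschitzWith_one (hf : f ∈ FBL E) : LipschitzWith 1 f :=
  LipschitzWith.of_dist_le_mul fun x y => by
    simpa [Real.dist_eq] using FBL.abs_sub_le_dist hf x y

variable [MeasurableSpace E] [BorelSpace E] {Ω : Type*} [MeasurableSpace Ω] {μ : Measure Ω}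
  {U V : Ω → E}

theorem integrable_comp [IsFiniteMeasure μ] (hf : f ∈ FBL E) (hU : Measurable U) :
    Integrable (fun ω => f (U ω)) μ :=
  (integrable_const (1 : ℝ)).mono'
    ((FBL.lipschitzWith_one hf).continuous.measurable.comp hU).aestronglyMeasurable
    (ae_of_all _ fun ω => by simpa using FBL.abs_le_one hf (U ω))

theorem abs_integral_sub_le [SecondCountableTopology E] [IsProbabilityMeasure μ]
    (hf : f ∈ FBL E) (hU : Measurable U) (hV : Measurable V) {δ : ℝ} (hδ : 0 ≤ δ) :
    |∫ ω, f (U ω) ∂μ - ∫ ω, f (V ω) ∂μ| ≤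
      2 * μ.real {ω | δ < dist (U ω) (V ω)} + δ := by
  set A := {ω | δ < dist (U ω) (V ω)}
  have hA : MeasurableSet A := measurableSet_lt measurable_const (hU.dist hV)
  have hpoint : ∀ ω, |f (U ω) - f (V ω)| ≤ A.indicator (fun _ => (2 : ℝ)) ω + δ := by
    intro ω
    by_cases hω : ω ∈ A
    · rw [Set.indicator_of_mem hω]
      calc |f (U ω) - f (V ω)| ≤ |f (U ω)| + |f (V ω)| := abs_sub _ _
        _ ≤ 2 + δ := by linarith [FBL.abs_le_one hf (U ω), FBL.abs_le_one hf (V ω)]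
    · rw [Set.indicator_of_notMem hω]
      have hclose : dist (U ω) (V ω) ≤ δ := le_of_not_gt hω
      linarith [FBL.abs_sub_le_dist hf (U ω) (V ω)]
  have hbound : Integrable (fun ω => A.indicator (fun _ => (2 : ℝ)) ω + δ) μ :=
    ((integrable_const _).indicator hA).add (integrable_const _)
  calc |∫ ω, f (U ω) ∂μ - ∫ ω, f (V ω) ∂μ|
      = |∫ ω, (f (U ω) - f (V ω)) ∂μ| := by
        rw [integral_sub (FBL.integrable_comp hf hU) (FBL.integrable_comp hf hV)]
    _ ≤ ∫ ω, |f (U ω) - f (V ω)| ∂μ := abs_integral_le_integral_abs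
    _ ≤ ∫ ω, (A.indicator (fun _ => (2 : ℝ)) ω + δ) ∂μ :=
        integral_mono ((FBL.integrable_comp hf hU).sub (FBL.integrable_comp hf hV)).abs
          hbound hpoint
    _ = 2 * μ.real A + δ := by
        rw [integral_add ((integrable_const _).indicator hA) (integrable_const _),
          integral_indicator_const _ hA, integral_const]
        simp [mul_comm]

end FBL

theorem stmt14_general {E Ω Θ : Type*} [MetricSpace E] [TopologicalSpace.SeparableSpace E]
    [MeasurableSpace E] [BorelSpace E] [MeasurableSpace Ω]
    (P : Θ → Measure Ω) (hP : ∀ θ, IsProbabilityMeasure (P θ))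
    (X Y : ℕ → Ω → E) (X₀ : Ω → E)
    (hX : ∀ n, Measurable (X n)) (hY : ∀ n, Measurable (Y n))
    (hd : ∀ ε : ℝ, 0 < ε → ∀ ε' : ℝ≥0∞, 0 < ε' → ∃ N, ∀ n ≥ N, ∀ θ,
      P θ {ω | ε < dist (X n ω) (Y n ω)} ≤ ε')
    (hconv : ∀ ε : ℝ, 0 < ε → ∃ N, ∀ n ≥ N, ∀ θ, ∀ f ∈ FBL E,
      |(∫ ω, f (X n ω) ∂(P θ)) - (∫ ω, f (X₀ ω) ∂(P θ))| ≤ ε) :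
    ∀ ε : ℝ, 0 < ε → ∃ N, ∀ n ≥ N, ∀ θ, ∀ f ∈ FBL E,
      |(∫ ω, f (Y n ω) ∂(P θ)) - (∫ ω, f (X₀ ω) ∂(P θ))| ≤ ε := by
  have := UniformSpace.secondCountable_of_separable E
  intro ε hε
  obtain ⟨N₁, hN₁⟩ := hd (ε / 4) (by positivity) (ENNReal.ofReal (ε / 8)) (by positivity)
  obtain ⟨N₂, hN₂⟩ := hconv (ε / 2) (by positivity)
  refine ⟨max N₁ N₂, fun n hn θ f hf => ?_⟩
  have hfar : (P θ).real {ω | ε / 4 < dist (X n ω) (Y n ω)} ≤ ε / 8 :=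
    ENNReal.toReal_le_of_le_ofReal (by positivity) (hN₁ n (le_of_max_le_left hn) θ)
  have hclose := FBL.abs_integral_sub_le (μ := P θ) hf (hY n) (hX n) (δ := ε / 4)
    (by positivity)
  simp_rw [dist_comm (Y n _)] at hclose
  calc |∫ ω, f (Y n ω) ∂P θ - ∫ ω, f (X₀ ω) ∂P θ|
      ≤ |∫ ω, f (Y n ω) ∂P θ - ∫ ω, f (X n ω) ∂P θ|
        + |∫ ω, f (X n ω) ∂P θ - ∫ ω, f (X₀ ω) ∂P θ| := abs_sub_le _ _ _
    _ ≤ (2 * (ε / 8) + ε / 4) + ε / 2 := by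
        gcongr
        · linarith
        · exact hN₂ n (le_of_max_le_right hn) θ f hf
    _ = ε := by ring

/-- If `d(X_n, Y_n) → 0` in probability uniformly over `θ` and `X_n → X` weakly uniformly
over `θ` (in dual bounded Lipschitz distance), then `Y_n → X` weakly uniformly over `θ`. -/
theorem stmt14 {E Ω Θ : Type*} [MetricSpace E] [TopologicalSpace.SeparableSpace E]
    [MeasurableSpace E] [BorelSpace E] [MeasurableSpace Ω]
    (P : Θ → Measure Ω) (hP : ∀ θ, IsProbabilityMeasure (P θ))
    (X Y : ℕ → Ω → E) (X₀ : Ω → E)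
    (hX : ∀ n, Measurable (X n)) (hY : ∀ n, Measurable (Y n)) (hX₀ : Measurable X₀)
    (hd : ∀ ε : ℝ, 0 < ε → ∀ ε' : ℝ≥0∞, 0 < ε' → ∃ N, ∀ n ≥ N, ∀ θ,
      P θ {ω | ε < dist (X n ω) (Y n ω)} ≤ ε')
    (hconv : ∀ ε : ℝ, 0 < ε → ∃ N, ∀ n ≥ N, ∀ θ, ∀ f ∈ FBL E,
      |(∫ ω, f (X n ω) ∂(P θ)) - (∫ ω, f (X₀ ω) ∂(P θ))| ≤ ε) :
    ∀ ε : ℝ, 0 < ε → ∃ N, ∀ n ≥ N, ∀ θ, ∀ f ∈ FBL E,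
      |(∫ ω, f (Y n ω) ∂(P θ)) - (∫ ω, f (X₀ ω) ∂(P θ))| ≤ ε :=
  stmt14_general P hP X Y X₀ hX hY hd hconv
end

section
/- Let d ≥ 1, Θ a parameter set, Ω a measurable space carrying a family of probability measures (P_θ)_{θ∈Θ} with expectations E_θ, and let X_n, X : Ω → ℝ^d (n ∈ ℕ) be Borel measurable. Assume: (a) sup_{θ∈Θ} sup_{f∈F_BL(ℝ^d)} E_θ[|f(X_n) − f(X)|] → 0 as n → ∞; and (b) the family of laws of X is tight uniformly in θ, i.e. for every ε > 0 there is a compact set K ⊆ ℝ^d with inf_{θ∈Θ} P_θ(X ∈ K) ≥ 1 − ε. Then for every ε > 0 there exist a compact set K_ε ⊆ ℝ^d and n₀ ∈ ℕ such that for all n ≥ n₀, inf_{θ∈Θ} P_θ(X_n ∈ K_ε) ≥ 1 − ε. -/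
/-!
Take a compact `K` carrying mass `≥ 1 - ε/2` under every law of `X`, and a 1-Lipschitz cutoff
`g` with `1_K ≤ g ≤ 1_{K'}`, where `K'` is the closed 1-thickening of `K` (compact, since `ℝ^d` is
proper). Then `g/2 ∈ F_BL`, so uniformly in `θ` and for large `n`,
`P_θ(X_n ∈ K') ≥ E_θ g(X_n) ≥ E_θ g(X) - E_θ|g(X_n) - g(X)| ≥ P_θ(X ∈ K) - ε/2 ≥ 1 - ε`.
-/

open MeasureTheory
open scoped ENNReal

open Metric Set

theorem mem_Icc_of_indicator_le_le {E : Type*} {s t : Set E} {g : E → ℝ}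
    (hgs : s.indicator 1 ≤ g) (hgt : g ≤ t.indicator 1) (x : E) : g x ∈ Icc 0 1 :=
  ⟨(s.indicator_nonneg (fun _ _ => zero_le_one) x).trans (hgs x),
    (hgt x).trans (t.indicator_le_self' (fun _ _ => zero_le_one) x)⟩

theorem half_mem_FBL {E : Type*} [PseudoMetricSpace E] {g : E → ℝ} (hg : LipschitzWith 1 g)
    (hg₀ : ∀ x, 0 ≤ g x) (hg₁ : ∀ x, g x ≤ 1) : (fun x => g x / 2) ∈ FBL E := by
  refine ⟨1 / 2, 1 / 2, by norm_num, by norm_num, by norm_num, fun x => ?_, fun x y => ?_⟩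
  · rw [abs_of_nonneg (by linarith [hg₀ x])]
    linarith [hg₁ x]
  · have h := hg.dist_le_mul x y
    rw [Real.dist_eq, NNReal.coe_one, one_mul] at h
    rw [← sub_div, abs_div, abs_two]
    linarith

theorem exists_lipschitzWith_one_indicator_le_le_indicator_cthickening {E : Type*}
    [PseudoMetricSpace E] (K : Set E) :
    ∃ g : E → ℝ, LipschitzWith 1 g ∧ K.indicator 1 ≤ g ∧ g ≤ (cthickening 1 K).indicator 1 := by
  refine ⟨fun x => thickenedIndicator one_pos K x, ?_, fun x => ?_, fun x => ?_⟩
  · have h := lipschitzWith_thickenedIndicator one_pos K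
    rw [Real.toNNReal_one, inv_one] at h
    exact fun x y => h x y
  · by_cases hx : x ∈ K
    · simp [hx, thickenedIndicator_one one_pos K hx]
    · simp [hx]
  · by_cases hx : x ∈ cthickening 1 K
    · simpa [hx] using thickenedIndicator_le_one one_pos K x
    · have hx' : x ∉ thickening 1 K := fun h => hx (thickening_subset_cthickening 1 K h)
      simp [hx, thickenedIndicator_zero one_pos K hx']

theorem measure_preimage_le_add_integral_abs_sub {Ω E : Type*} [MeasurableSpace Ω]
    [MeasurableSpace E] {μ : Measure Ω} [IsFiniteMeasure μ] {Y Z : Ω → E}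
    (hY : Measurable Y) (hZ : Measurable Z) {g : E → ℝ} (hg : Measurable g) {s t : Set E}
    (hs : MeasurableSet s) (ht : MeasurableSet t) (hgs : s.indicator 1 ≤ g)
    (hgt : g ≤ t.indicator 1) :
    μ (Z ⁻¹' s) ≤ μ (Y ⁻¹' t) + ENNReal.ofReal (∫ ω, |g (Y ω) - g (Z ω)| ∂μ) := by
  have hg_abs : ∀ x, ‖g x‖ ≤ 1 := fun x => by
    obtain ⟨h₀, h₁⟩ := mem_Icc_of_indicator_le_le hgs hgt x
    rwa [Real.norm_eq_abs, abs_of_nonneg h₀]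
  have hint : ∀ {W : Ω → E}, Measurable W → Integrable (fun ω => g (W ω)) μ := fun hW =>
    (integrable_const 1).mono' (hg.comp hW).aestronglyMeasurable
      (Filter.Eventually.of_forall fun ω => hg_abs _)
  have hind : ∀ {u : Set Ω}, MeasurableSet u → Integrable (u.indicator 1) μ := fun hu =>
    (integrable_const (1 : ℝ)).indicator hu
  have hreal : μ.real (Z ⁻¹' s) ≤ μ.real (Y ⁻¹' t) + ∫ ω, |g (Y ω) - g (Z ω)| ∂μ := calc
    μ.real (Z ⁻¹' s) = ∫ ω, (Z ⁻¹' s).indicator 1 ω ∂μ := (integral_indicator_one (hZ hs)).symm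
    _ ≤ ∫ ω, g (Z ω) ∂μ := integral_mono (hind (hZ hs)) (hint hZ) fun ω => hgs (Z ω)
    _ = ∫ ω, g (Y ω) ∂μ + ∫ ω, (g (Z ω) - g (Y ω)) ∂μ := by
      rw [integral_sub (hint hZ) (hint hY)]; ring
    _ ≤ ∫ ω, (Y ⁻¹' t).indicator 1 ω ∂μ + ∫ ω, |g (Y ω) - g (Z ω)| ∂μ := by
      refine add_le_add (integral_mono (hint hY) (hind (hY ht)) fun ω => hgt (Y ω))
        (integral_mono ((hint hZ).sub (hint hY)) ((hint hY).sub (hint hZ)).abs fun ω => ?_)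
      rw [abs_sub_comm]
      exact le_abs_self _
    _ = μ.real (Y ⁻¹' t) + ∫ ω, |g (Y ω) - g (Z ω)| ∂μ := by rw [integral_indicator_one (hY ht)]
  calc μ (Z ⁻¹' s) = ENNReal.ofReal (μ.real (Z ⁻¹' s)) := (ofReal_measureReal).symm
    _ ≤ ENNReal.ofReal (μ.real (Y ⁻¹' t) + ∫ ω, |g (Y ω) - g (Z ω)| ∂μ) :=
      ENNReal.ofReal_le_ofReal hreal
    _ ≤ _ := by
      rw [ENNReal.ofReal_add measureReal_nonneg (integral_nonneg fun _ => abs_nonneg _),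
        ofReal_measureReal]

theorem stmt15_general {Ω Θ : Type*} [MeasurableSpace Ω] (d : ℕ)
    (P : Θ → Measure Ω) (hP : ∀ θ, IsProbabilityMeasure (P θ))
    (X : ℕ → Ω → EuclideanSpace ℝ (Fin d)) (X₀ : Ω → EuclideanSpace ℝ (Fin d))
    (hX : ∀ n, Measurable (X n)) (hX₀ : Measurable X₀)
    (ha : ∀ ε : ℝ, 0 < ε → ∃ N, ∀ n ≥ N, ∀ θ, ∀ f ∈ FBL (EuclideanSpace ℝ (Fin d)),
      (∫ ω, |f (X n ω) - f (X₀ ω)| ∂(P θ)) ≤ ε)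
    (hb : ∀ ε : ℝ≥0∞, 0 < ε → ∃ K : Set (EuclideanSpace ℝ (Fin d)), IsCompact K ∧
      ∀ θ, 1 - ε ≤ P θ (X₀ ⁻¹' K)) :
    ∀ ε : ℝ≥0∞, 0 < ε → ∃ K : Set (EuclideanSpace ℝ (Fin d)), IsCompact K ∧
      ∃ n₀ : ℕ, ∀ n ≥ n₀, ∀ θ, 1 - ε ≤ P θ (X n ⁻¹' K) := by
  intro ε hε
  rcases eq_or_ne ε ∞ with rfl | hε_top
  · exact ⟨∅, isCompact_empty, 0, fun n _ θ => by simp⟩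
  obtain ⟨K, hK, hX₀K⟩ := hb (ε / 2) (ENNReal.half_pos hε.ne')
  obtain ⟨g, hg, hgK, hgK'⟩ := exists_lipschitzWith_one_indicator_le_le_indicator_cthickening K
  obtain ⟨N, hN⟩ := ha (ε.toReal / 4) (by positivity [ENNReal.toReal_pos hε.ne' hε_top])
  have hg_Icc := mem_Icc_of_indicator_le_le hgK hgK'
  refine ⟨cthickening 1 K, hK.cthickening, N, fun n hn θ => ?_⟩
  have hclose : ∫ ω, |g (X n ω) - g (X₀ ω)| ∂P θ ≤ ε.toReal / 2 := by
    have h := hN n hn θ _ (half_mem_FBL hg (fun x => (hg_Icc x).1) (fun x => (hg_Icc x).2))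
    simp_rw [← sub_div, abs_div, abs_two, integral_div] at h
    linarith
  have hX_K := measure_preimage_le_add_integral_abs_sub (μ := P θ) (hX n) hX₀
    hg.continuous.measurable hK.isClosed.measurableSet isClosed_cthickening.measurableSet hgK hgK'
  rw [tsub_le_iff_right]
  calc 1 ≤ P θ (X₀ ⁻¹' K) + ε / 2 := tsub_le_iff_right.1 (hX₀K θ)
    _ ≤ P θ (X n ⁻¹' cthickening 1 K) + ENNReal.ofReal (ε.toReal / 2) + ε / 2 := by
      gcongr
      exact hX_K.trans (by gcongr)
    _ = P θ (X n ⁻¹' cthickening 1 K) + ε := by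
      rw [ENNReal.ofReal_div_of_pos two_pos, ENNReal.ofReal_toReal hε_top, ENNReal.ofReal_ofNat,
        add_assoc, ENNReal.add_halves]

/-- If `X_n → X` weakly uniformly over `θ` (tested against `F_BL(ℝ^d)`) and the laws of `X`
are tight uniformly in `θ`, then the laws of `X_n` are eventually tight uniformly in `θ`:
for every `ε > 0` there are a compact `K_ε` and `n₀` with
`inf_θ P_θ(X_n ∈ K_ε) ≥ 1 - ε` for all `n ≥ n₀`. -/
theorem stmt15 {Ω Θ : Type*} [MeasurableSpace Ω] (d : ℕ) (hd : 1 ≤ d)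
    (P : Θ → Measure Ω) (hP : ∀ θ, IsProbabilityMeasure (P θ))
    (X : ℕ → Ω → EuclideanSpace ℝ (Fin d)) (X₀ : Ω → EuclideanSpace ℝ (Fin d))
    (hX : ∀ n, Measurable (X n)) (hX₀ : Measurable X₀)
    (ha : ∀ ε : ℝ, 0 < ε → ∃ N, ∀ n ≥ N, ∀ θ, ∀ f ∈ FBL (EuclideanSpace ℝ (Fin d)),
      (∫ ω, |f (X n ω) - f (X₀ ω)| ∂(P θ)) ≤ ε)
    (hb : ∀ ε : ℝ≥0∞, 0 < ε → ∃ K : Set (EuclideanSpace ℝ (Fin d)), IsCompact K ∧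
      ∀ θ, 1 - ε ≤ P θ (X₀ ⁻¹' K)) :
    ∀ ε : ℝ≥0∞, 0 < ε → ∃ K : Set (EuclideanSpace ℝ (Fin d)), IsCompact K ∧
      ∃ n₀ : ℕ, ∀ n ≥ n₀, ∀ θ, 1 - ε ≤ P θ (X n ⁻¹' K) :=
  stmt15_general d P hP X X₀ hX hX₀ ha hb
end
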